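/- For every δ ∈ (0,1), metric spaces (M, d_M), (N, d_N), every closed S ⊆ M, every x₁,…,xₙ ∈ M \ S, and every Lipschitz map φ : S → N with Lipschitz constant L, if K = e_n(M; N) < ∞ then there exists Φ : S ∪ {x₁,…,xₙ} → N extending φ with Lipschitz constant at most (2 + δ + (1+δ)² K) · L. -/

import Mathlib

open Set ENNReal NNReal

/-- The (possibly infinite) Lipschitz constant of `φ` restricted to `A`. -/
noncomputable def lipConstOn {M N : Type*} [MetricSpace M] [MetricSpace N]
    (φ : M → N) (A : Set M) : ℝ≥0∞ :=
  sInf {C : ℝ≥0∞ | ∀ x ∈ A, ∀ y ∈ A, edist (φ x) (φ y) ≤ C * edist x y}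

/-- `eFin M N n = e_n(M; N)`. -/
noncomputable def eFin (M N : Type*) [MetricSpace M] [MetricSpace N] (n : ℕ) : ℝ≥0∞ :=
  ⨆ (A : Set M) (_ : A.encard ≤ (n : ℕ∞)),
    sInf {K : ℝ≥0∞ | 1 ≤ K ∧ ∀ φ : M → N, lipConstOn φ A < ⊤ →
      ∃ Φ : M → N, (∀ a ∈ A, Φ a = φ a) ∧ lipConstOn Φ Set.univ ≤ K * lipConstOn φ A}

/-! Pick for every `xⱼ` a point `sⱼ ∈ S` that is nearest up to a factor `1 + δ` (possible
because `S` is closed, so `d(xⱼ, S) > 0`), and extend `φ` from the at most `n` points `sⱼ` to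
all of `M` with constant `(1 + δ) K L`. Glue this extension on the `xⱼ` to `φ` on `S`. For
`t ∈ S` the triangle inequality through `sⱼ` bounds `d(Φ xⱼ, φ t)` by
`(1 + δ) K L · d(xⱼ, sⱼ) + L (d(xⱼ, sⱼ) + d(xⱼ, t)) ≤ ((1 + δ)² K + 2 + δ) L · d(xⱼ, t)`. -/

section ExtensionConstant

variable {M N : Type*} [MetricSpace M] [MetricSpace N]

lemma edist_le_lipConstOn (f : M → N) (A : Set M) {x y : M} (hx : x ∈ A) (hy : y ∈ A) :
    edist (f x) (f y) ≤ lipConstOn f A * edist x y := by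
  by_cases h0 : edist x y = 0
  · obtain rfl := edist_eq_zero.mp h0
    simp
  · have hquot : edist (f x) (f y) / edist x y ≤ lipConstOn f A :=
      le_sInf fun C hC =>
        (ENNReal.div_le_iff_le_mul (Or.inl h0) (Or.inl (edist_ne_top x y))).mpr (hC x hx y hy)
    calc edist (f x) (f y) = edist (f x) (f y) / edist x y * edist x y :=
          (ENNReal.div_mul_cancel h0 (edist_ne_top x y)).symm
      _ ≤ lipConstOn f A * edist x y := mul_le_mul_left hquot _

lemma LipschitzOnWith.lipConstOn_le {f : M → N} {A : Set M} {L : ℝ≥0}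
    (hf : LipschitzOnWith L f A) : lipConstOn f A ≤ L :=
  sInf_le fun _ hx _ hy => hf hx hy

lemma one_le_eFin (n : ℕ) : 1 ≤ eFin M N n :=
  le_iSup₂_of_le ∅ (by simp) (le_sInf fun _ hK => hK.1)

lemma exists_extension_of_eFin_lt {n : ℕ} {A : Set M} (hA : A.encard ≤ n) {K : ℝ≥0∞}
    (hK : eFin M N n < K) (f : M → N) (hf : lipConstOn f A < ⊤) :
    ∃ Φ : M → N, EqOn Φ f A ∧ lipConstOn Φ univ ≤ K * lipConstOn f A := by
  have hA_lt : sInf {K : ℝ≥0∞ | 1 ≤ K ∧ ∀ φ : M → N, lipConstOn φ A < ⊤ →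
      ∃ Φ : M → N, (∀ a ∈ A, Φ a = φ a) ∧ lipConstOn Φ univ ≤ K * lipConstOn φ A} < K :=
    lt_of_le_of_lt (le_iSup₂_of_le A hA le_rfl) hK
  obtain ⟨K', hK', hK'K⟩ := sInf_lt_iff.mp hA_lt
  obtain ⟨Φ, hΦA, hΦ⟩ := hK'.2 f hf
  exact ⟨Φ, hΦA, hΦ.trans (by gcongr)⟩

end ExtensionConstant

lemma ENNReal.lt_one_add_mul_self {a δ : ℝ≥0∞} (ha0 : a ≠ 0) (hatop : a ≠ ⊤)
    (hδ : δ ≠ 0) : a < (1 + δ) * a := by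
  rw [add_mul, one_mul]
  exact ENNReal.lt_add_right hatop (mul_ne_zero hδ ha0)

lemma IsClosed.exists_mem_forall_edist_le_one_add_mul {M : Type*} [PseudoMetricSpace M]
    {S : Set M} (hS : IsClosed S) (hne : S.Nonempty) {x : M} (hx : x ∉ S) {δ : ℝ≥0∞}
    (hδ : δ ≠ 0) :
    ∃ p ∈ S, ∀ t ∈ S, edist x p ≤ (1 + δ) * edist x t := by
  have hpos : Metric.infEDist x S ≠ 0 := fun h =>
    hx (hS.closure_eq ▸ Metric.mem_closure_iff_infEDist_zero.mpr h)
  obtain ⟨p, hp, hxp⟩ := Metric.infEDist_lt_iff.mp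
    (ENNReal.lt_one_add_mul_self hpos (Metric.infEDist_ne_top hne) hδ)
  exact ⟨p, hp, fun t ht => hxp.le.trans (by gcongr; exact Metric.infEDist_le_edist_of_mem ht)⟩

section Gluing

variable {M N : Type*} [PseudoEMetricSpace M] [PseudoEMetricSpace N]

lemma edist_le_of_agree_at_near_point {φ Ψ : M → N} {S : Set M} {L : ℝ≥0} {C c : ℝ≥0∞}
    {x p t : M} (hφ : LipschitzOnWith L φ S) (hp : p ∈ S) (ht : t ∈ S) (hΨp : Ψ p = φ p)
    (hΨ : edist (Ψ x) (Ψ p) ≤ C * edist x p) (hxp : edist x p ≤ c * edist x t) :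
    edist (Ψ x) (φ t) ≤ (C * c + L * (c + 1)) * edist x t :=
  calc edist (Ψ x) (φ t) ≤ edist (Ψ x) (Ψ p) + edist (φ p) (φ t) :=
        hΨp ▸ edist_triangle _ _ _
    _ ≤ C * edist x p + L * (edist x p + edist x t) := by
        gcongr
        exact (hφ hp ht).trans (by gcongr; exact edist_triangle_left _ _ _)
    _ ≤ C * (c * edist x t) + L * (c * edist x t + edist x t) := by gcongr
    _ = (C * c + L * (c + 1)) * edist x t := by ring

open Classical in
lemma edist_piecewise_le {f g : M → N} {S T : Set M} {C : ℝ≥0∞}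
    (hf : ∀ a ∈ S, ∀ b ∈ S, edist (f a) (f b) ≤ C * edist a b)
    (hg : ∀ a ∈ T, ∀ b ∈ T, edist (g a) (g b) ≤ C * edist a b)
    (hfg : ∀ a ∈ S, ∀ b ∈ T, edist (f a) (g b) ≤ C * edist a b) :
    ∀ a ∈ S ∪ T, ∀ b ∈ S ∪ T,
      edist (S.piecewise f g a) (S.piecewise f g b) ≤ C * edist a b := by
  intro a ha b hb
  by_cases haS : a ∈ S <;> by_cases hbS : b ∈ S <;>
    simp only [piecewise, haS, hbS, if_true, if_false]
  · exact hf a haS b hbS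
  · exact hfg a haS b (hb.resolve_left hbS)
  · rw [edist_comm, edist_comm a]
    exact hfg b hbS a (ha.resolve_left haS)
  · exact hg a (ha.resolve_left haS) b (hb.resolve_left hbS)

end Gluing

theorem extension_to_finitely_many_points_general
    {M N : Type*} [MetricSpace M] [MetricSpace N] (n : ℕ)
    (δ : ℝ≥0) (hδ0 : 0 < δ)
    (S : Set M) (hSclosed : IsClosed S)
    (x : Fin n → M) (hx : ∀ j, x j ∉ S)
    (φ : M → N) (L : ℝ≥0) (hφ : LipschitzOnWith L φ S)
    (hK : eFin M N n ≠ ⊤) :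
    ∃ Φ : M → N, (∀ s ∈ S, Φ s = φ s) ∧
      ∀ a ∈ S ∪ Set.range x, ∀ b ∈ S ∪ Set.range x,
        edist (Φ a) (Φ b) ≤
          ((2 + (δ : ℝ≥0∞) + (1 + (δ : ℝ≥0∞)) ^ 2 * eFin M N n) * (L : ℝ≥0∞)) * edist a b := by
  classical
  rcases S.eq_empty_or_nonempty with rfl | hS
  · obtain hM | ⟨⟨m⟩⟩ := isEmpty_or_nonempty M
    · exact ⟨φ, by simp, fun a => isEmptyElim a⟩
    · exact ⟨fun _ => φ m, by simp, by simp⟩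
  have hδ : (δ : ℝ≥0∞) ≠ 0 := by exact_mod_cast hδ0.ne'
  choose s hsS hs using fun j => hSclosed.exists_mem_forall_edist_le_one_add_mul hS (hx j) hδ
  set K := (1 + (δ : ℝ≥0∞)) * eFin M N n
  have hφs : lipConstOn φ (range s) ≤ L :=
    (hφ.mono (range_subset_iff.mpr hsS)).lipConstOn_le
  have hK0 : eFin M N n ≠ 0 := (zero_lt_one.trans_le (one_le_eFin n)).ne'
  obtain ⟨Φ₀, hΦ₀s, hΦ₀⟩ := exists_extension_of_eFin_lt (by simpa using encard_image_le s univ)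
    (ENNReal.lt_one_add_mul_self hK0 hK hδ) φ (hφs.trans_lt coe_lt_top)
  have hΦ₀L : ∀ a b, edist (Φ₀ a) (Φ₀ b) ≤ K * L * edist a b := fun a b =>
    (edist_le_lipConstOn Φ₀ univ trivial trivial).trans (by gcongr; exact hΦ₀.trans (by gcongr))
  have hK_le : K ≤ (1 + (δ : ℝ≥0∞)) ^ 2 * eFin M N n := by
    rw [sq, mul_assoc]
    exact le_mul_of_one_le_left' le_self_add
  refine ⟨S.piecewise φ Φ₀, fun t ht => piecewise_eq_of_mem _ _ _ ht,
    edist_piecewise_le (fun a ha b hb => (hφ ha hb).trans ?_)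
      (fun a _ b _ => (hΦ₀L a b).trans ?_) ?_⟩
  · gcongr
    exact le_mul_of_one_le_left' (le_add_right (le_add_right (one_le_two (α := ℝ≥0∞))))
  · gcongr
    exact hK_le.trans le_add_self
  · rintro t ht _ ⟨j, rfl⟩
    rw [edist_comm, edist_comm t]
    refine (edist_le_of_agree_at_near_point hφ (hsS j) ht (hΦ₀s ⟨j, rfl⟩) (hΦ₀L _ _)
      (hs j t ht)).trans_eq ?_
    ring

/-- Quantitative extension: if `K = e_n(M;N) < ∞`, then any `L`-Lipschitz `φ : S → N`
on a closed `S` extends to `S ∪ {x₁,…,xₙ}` with Lipschitz constant at most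
`(2 + δ + (1+δ)² K) L`, for any `δ ∈ (0,1)`. -/
theorem extension_to_finitely_many_points
    {M N : Type*} [MetricSpace M] [MetricSpace N] (n : ℕ)
    (δ : ℝ≥0) (hδ0 : 0 < δ) (hδ1 : δ < 1)
    (S : Set M) (hSclosed : IsClosed S)
    (x : Fin n → M) (hx : ∀ j, x j ∉ S)
    (φ : M → N) (L : ℝ≥0) (hφ : LipschitzOnWith L φ S)
    (hK : eFin M N n ≠ ⊤) :
    ∃ Φ : M → N, (∀ s ∈ S, Φ s = φ s) ∧
      ∀ a ∈ S ∪ Set.range x, ∀ b ∈ S ∪ Set.range x,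
        edist (Φ a) (Φ b) ≤
          ((2 + (δ : ℝ≥0∞) + (1 + (δ : ℝ≥0∞)) ^ 2 * eFin M N n) * (L : ℝ≥0∞)) * edist a b :=
  extension_to_finitely_many_points_general n δ hδ0 S hSclosed x hx φ L hφ hK
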